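/- Let q^{-1} = y_0y_1 + y_2y_3. For a_0,a_1,a_2,a_3 ∈ ℂ set l = a_0x_0 + a_1x_1 + a_2x_2 + a_3x_3, p_l = a_1y_0 + a_0y_1 + a_3y_2 + a_2y_3 and q_l = (1/2)p_l^2 − (1/3)(a_0a_1+a_2a_3)·q^{-1}. Then q_l(∂)(l^2) = (10/3)·(a_0a_1 + a_2a_3)^2 (as a constant polynomial). In particular q_l(∂)(l^2) = 0 if and only if a_0a_1+a_2a_3 = 0, so the 'inverse quartic' f^{-1} of f = (x_0x_1+x_2x_3)^2, defined on linear forms by l ↦ q_l(∂)(l^2), is a nonzero scalar multiple of the square (y_0y_1+y_2y_3)^2 of the inverse quadric, evaluated at the coefficient vector (a_0,a_1,a_2,a_3). -/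

import Mathlib

open MvPolynomial

/-- Iterated partial derivative `∂^α f`: `MvPolynomial.pderiv i` is applied `α i` times
for each variable `i`. -/
noncomputable def pdPow {n : ℕ} (α : Fin n →₀ ℕ) (f : MvPolynomial (Fin n) ℂ) :
    MvPolynomial (Fin n) ℂ :=
  (List.finRange n).foldr (fun i g => (fun h => MvPolynomial.pderiv i h)^[α i] g) f

/-- `g(∂)f`: the polynomial differential operator associated to `g` applied to `f`. -/
noncomputable def apolarAct {n : ℕ} (g f : MvPolynomial (Fin n) ℂ) :
    MvPolynomial (Fin n) ℂ :=
  ∑ α ∈ g.support, coeff α g • pdPow α f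

/-- The inverse quadric `q^{-1} = y_0y_1 + y_2y_3`. -/
noncomputable def qQinv : MvPolynomial (Fin 4) ℂ := X 0 * X 1 + X 2 * X 3

/-- `l = a_0x_0 + a_1x_1 + a_2x_2 + a_3x_3`. -/
noncomputable def lin (a0 a1 a2 a3 : ℂ) : MvPolynomial (Fin 4) ℂ :=
  C a0 * X 0 + C a1 * X 1 + C a2 * X 2 + C a3 * X 3

/-- The polar `p_l = a_1y_0 + a_0y_1 + a_3y_2 + a_2y_3`. -/
noncomputable def polarL (a0 a1 a2 a3 : ℂ) : MvPolynomial (Fin 4) ℂ :=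
  C a1 * X 0 + C a0 * X 1 + C a3 * X 2 + C a2 * X 3

/-- `q_l = (1/2)p_l^2 − (1/3)(a_0a_1 + a_2a_3)·q^{-1}`. -/
noncomputable def qL (a0 a1 a2 a3 : ℂ) : MvPolynomial (Fin 4) ℂ :=
  C (1 / 2 : ℂ) * polarL a0 a1 a2 a3 ^ 2 - C ((a0 * a1 + a2 * a3) / 3) * qQinv

/-! If `l` has constant gradient `a`, then `∂^α (l^d) = d! a^α` whenever `|α| = d`, so for any
form `g` of degree `d` one gets `g(∂)(l^d) = d! · g(a)`. Here `p_l(a) = 2s` and `q^{-1}(a) = s`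
with `s = a_0a_1 + a_2a_3`, so `q_l(a) = 2s^2 - s^2/3 = (5/3)s^2`, and `2! · q_l(a) = (10/3)s^2`. -/

open scoped Nat

section ConstantGradient

variable {n : ℕ} {a : Fin n → ℂ} {l : MvPolynomial (Fin n) ℂ}

theorem pderiv_C_mul_pow (hl : ∀ i, pderiv i l = C (a i)) (i : Fin n) (c : ℂ) (m : ℕ) :
    pderiv i (C c * l ^ m) = C (c * m * a i) * l ^ (m - 1) := by
  rw [pderiv_C_mul, Derivation.leibniz_pow, hl, nsmul_eq_mul, smul_eq_mul, map_mul, map_mul,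
    map_natCast]
  ring

theorem iterate_pderiv_C_mul_pow (hl : ∀ i, pderiv i l = C (a i)) (i : Fin n) (c : ℂ)
    (m k : ℕ) :
    (pderiv i)^[k] (C c * l ^ m) = C (c * m.descFactorial k * a i ^ k) * l ^ (m - k) := by
  induction k with
  | zero => simp
  | succ k ih =>
    rw [Function.iterate_succ_apply', ih, pderiv_C_mul_pow hl, Nat.descFactorial_succ,
      Nat.sub_sub]
    congr 2
    push_cast
    ring

theorem foldr_iterate_pderiv_C_mul_pow (hl : ∀ i, pderiv i l = C (a i)) (α : Fin n →₀ ℕ)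
    (c : ℂ) (m : ℕ) (L : List (Fin n)) :
    L.foldr (fun i g => (pderiv i)^[α i] g) (C c * l ^ m)
      = C (c * m.descFactorial (L.map α).sum * (L.map fun i => a i ^ α i).prod)
        * l ^ (m - (L.map α).sum) := by
  induction L with
  | nil => simp
  | cons i L ih =>
    rw [List.foldr_cons, ih, iterate_pderiv_C_mul_pow hl, List.map_cons, List.map_cons,
      List.sum_cons, List.prod_cons, Nat.sub_sub, Nat.add_comm (L.map α).sum,
      ← Nat.descFactorial_mul_descFactorial (Nat.le_add_left _ (α i)), Nat.add_sub_cancel]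
    congr 2
    push_cast
    ring

theorem pdPow_pow (hl : ∀ i, pderiv i l = C (a i)) (α : Fin n →₀ ℕ) (m : ℕ) :
    pdPow α (l ^ m) = C (m.descFactorial α.degree * ∏ i, a i ^ α i) * l ^ (m - α.degree) := by
  have h := foldr_iterate_pderiv_C_mul_pow hl α 1 m (List.finRange n)
  rw [C_1, one_mul, one_mul, ← Fin.sum_univ_def, ← Fin.prod_univ_def,
    ← Finsupp.degree_eq_sum] at h
  exact h

theorem apolarAct_pow_of_isHomogeneous (hl : ∀ i, pderiv i l = C (a i))
    {g : MvPolynomial (Fin n) ℂ} {d : ℕ} (hg : g.IsHomogeneous d) :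
    apolarAct g (l ^ d) = C (d ! * eval a g) := by
  rw [apolarAct, eval_eq', Finset.mul_sum, map_sum]
  refine Finset.sum_congr rfl fun α hα => ?_
  have hdeg : α.degree = d := by
    simpa [Finsupp.degree_eq_weight_one, Pi.one_def] using hg (mem_support_iff.mp hα)
  rw [pdPow_pow hl, hdeg, Nat.descFactorial_self, Nat.sub_self, pow_zero, mul_one, smul_eq_C_mul,
    ← C_mul]
  congr 1
  ring

end ConstantGradient

theorem pderiv_lin (a0 a1 a2 a3 : ℂ) (k : Fin 4) :
    pderiv k (lin a0 a1 a2 a3) = C (![a0, a1, a2, a3] k) := by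
  fin_cases k <;> simp [lin, pderiv_X]

theorem qQinv_isHomogeneous : qQinv.IsHomogeneous 2 :=
  ((isHomogeneous_X ℂ 0).mul (isHomogeneous_X ℂ 1)).add
    ((isHomogeneous_X ℂ 2).mul (isHomogeneous_X ℂ 3))

theorem polarL_isHomogeneous (a0 a1 a2 a3 : ℂ) : (polarL a0 a1 a2 a3).IsHomogeneous 1 :=
  (((isHomogeneous_C_mul_X a1 0).add (isHomogeneous_C_mul_X a0 1)).add
    (isHomogeneous_C_mul_X a3 2)).add (isHomogeneous_C_mul_X a2 3)

theorem qL_isHomogeneous (a0 a1 a2 a3 : ℂ) : (qL a0 a1 a2 a3).IsHomogeneous 2 :=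
  (((polarL_isHomogeneous a0 a1 a2 a3).pow 2).C_mul _).sub (qQinv_isHomogeneous.C_mul _)

theorem eval_qL (a0 a1 a2 a3 : ℂ) :
    eval ![a0, a1, a2, a3] (qL a0 a1 a2 a3) = 5 / 3 * (a0 * a1 + a2 * a3) ^ 2 := by
  simp only [qL, polarL, qQinv, map_sub, map_mul, map_add, map_pow, eval_C, eval_X,
    Matrix.cons_val_zero, Matrix.cons_val_one, Matrix.cons_val]
  ring

/-- `q_l(∂)(l^2) = (10/3)(a_0a_1 + a_2a_3)^2`, so `q_l(∂)(l^2) = 0` iff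
`a_0a_1 + a_2a_3 = 0`: the inverse quartic of `(x_0x_1+x_2x_3)^2` is a nonzero scalar
multiple of `(y_0y_1+y_2y_3)^2` evaluated at the coefficient vector. -/
theorem statement12 (a0 a1 a2 a3 : ℂ) :
    apolarAct (qL a0 a1 a2 a3) (lin a0 a1 a2 a3 ^ 2)
      = C ((10 / 3 : ℂ) * (a0 * a1 + a2 * a3) ^ 2) ∧
    (apolarAct (qL a0 a1 a2 a3) (lin a0 a1 a2 a3 ^ 2) = 0 ↔ a0 * a1 + a2 * a3 = 0) := by
  have key : apolarAct (qL a0 a1 a2 a3) (lin a0 a1 a2 a3 ^ 2)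
      = C ((10 / 3 : ℂ) * (a0 * a1 + a2 * a3) ^ 2) := by
    rw [apolarAct_pow_of_isHomogeneous (pderiv_lin a0 a1 a2 a3) (qL_isHomogeneous a0 a1 a2 a3),
      eval_qL, Nat.factorial_two]
    congr 1
    push_cast
    ring
  refine ⟨key, ?_⟩
  rw [key, C_eq_zero]
  simp
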